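/- An inverse sequence of groups is stable (pro-isomorphic to a constant sequence of identity maps) if and only if it is both pro-monomorphic and pro-epimorphic. -/

import Mathlib

/-!
Pro-monomorphy makes kernels stabilise: there is an index `N` such that an element of `G l`
that dies in `G N` already dies in `G j`, once `l` is large compared to `j`. Pro-epimorphy
gives the Mittag-Leffler condition: the images of `G l` in `G i` stabilise. Along a sparse enough
subsequence `n k` both hold at every step, so the bonding maps restrict to isomorphisms between
the images `S k` of `G (n (k + 1))` in `G (n k)`, and the sequence is pro-isomorphic to the
constant sequence `S 0`.
-/

open CategoryTheory

universe u

/-- The composition of the bonding maps of an inverse sequence of groups,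
`G j ⟶ G i` for `i ≤ j`. -/
def bondComp (G : ℕ → GrpCat.{u}) (f : ∀ i, G (i + 1) ⟶ G i) :
    (i j : ℕ) → i ≤ j → (G j ⟶ G i)
  | i, 0, h => by
      obtain rfl : i = 0 := Nat.le_zero.mp h
      exact 𝟙 (G 0)
  | i, j + 1, h =>
      if h' : i = j + 1 then by subst h'; exact 𝟙 (G (j + 1))
      else f j ≫ bondComp G f i j (by omega)

/-- A pro-isomorphism (commuting ladder diagram after passing to subsequences)
between two inverse sequences of groups. -/
structure ProIso (G : ℕ → GrpCat.{u}) (f : ∀ i, G (i + 1) ⟶ G i)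
    (H : ℕ → GrpCat.{u}) (g : ∀ i, H (i + 1) ⟶ H i) where
  I : ℕ → ℕ
  J : ℕ → ℕ
  strictI : StrictMono I
  strictJ : StrictMono J
  hIJ : ∀ k, I k ≤ J k
  hJI : ∀ k, J k ≤ I (k + 1)
  d : ∀ k, H (J k) ⟶ G (I k)
  u : ∀ k, G (I (k + 1)) ⟶ H (J k)
  comm₁ : ∀ k, u k ≫ d k =
    bondComp G f (I k) (I (k + 1)) (le_of_lt (strictI (Nat.lt_succ_self k)))
  comm₂ : ∀ k, d (k + 1) ≫ u k =
    bondComp H g (J k) (J (k + 1)) (le_of_lt (strictJ (Nat.lt_succ_self k)))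

/-- An inverse sequence of groups is *pro-monomorphic* if it is pro-isomorphic to
an inverse sequence of injective homomorphisms. -/
def IsProMono (G : ℕ → GrpCat.{u}) (f : ∀ i, G (i + 1) ⟶ G i) : Prop :=
  ∃ (H : ℕ → GrpCat.{u}) (g : ∀ i, H (i + 1) ⟶ H i),
    (∀ i, Function.Injective (g i)) ∧ Nonempty (ProIso G f H g)

/-- An inverse sequence of groups is *pro-epimorphic* (semistable) if it is
pro-isomorphic to an inverse sequence of surjective homomorphisms. -/
def IsProEpi (G : ℕ → GrpCat.{u}) (f : ∀ i, G (i + 1) ⟶ G i) : Prop :=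
  ∃ (H : ℕ → GrpCat.{u}) (g : ∀ i, H (i + 1) ⟶ H i),
    (∀ i, Function.Surjective (g i)) ∧ Nonempty (ProIso G f H g)

/-- An inverse sequence of groups is *stable* if it is pro-isomorphic to a constant
inverse sequence of identity maps. -/
def IsStable (G : ℕ → GrpCat.{u}) (f : ∀ i, G (i + 1) ⟶ G i) : Prop :=
  ∃ K : GrpCat.{u}, Nonempty (ProIso G f (fun _ => K) (fun _ => 𝟙 K))

section bondComp

variable (G : ℕ → GrpCat.{u}) (f : ∀ i, G (i + 1) ⟶ G i)

lemma bondComp_self (i : ℕ) (h : i ≤ i) : bondComp G f i i h = 𝟙 (G i) := by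
  cases i <;> simp [bondComp]

lemma bondComp_succ {i j : ℕ} (h : i ≤ j) :
    bondComp G f i (j + 1) (h.trans j.le_succ) = f j ≫ bondComp G f i j h := by
  rw [bondComp, dif_neg (by omega)]

lemma bondComp_comp {i j l : ℕ} (hij : i ≤ j) (hjl : j ≤ l) :
    bondComp G f j l hjl ≫ bondComp G f i j hij = bondComp G f i l (hij.trans hjl) := by
  induction l, hjl using Nat.le_induction with
  | base => rw [bondComp_self, Category.id_comp]
  | succ l hjl ih =>
    rw [bondComp_succ G f hjl, bondComp_succ G f (hij.trans hjl), Category.assoc, ih]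

lemma bondComp_injective (hf : ∀ i, Function.Injective (f i)) {i j : ℕ} (h : i ≤ j) :
    Function.Injective (bondComp G f i j h) := by
  induction j, h using Nat.le_induction with
  | base => rw [bondComp_self, GrpCat.coe_id]; exact Function.injective_id
  | succ j h ih => rw [bondComp_succ G f h, GrpCat.coe_comp]; exact ih.comp (hf j)

lemma bondComp_surjective (hf : ∀ i, Function.Surjective (f i)) {i j : ℕ} (h : i ≤ j) :
    Function.Surjective (bondComp G f i j h) := by
  induction j, h using Nat.le_induction with
  | base => rw [bondComp_self, GrpCat.coe_id]; exact Function.surjective_id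
  | succ j h ih => rw [bondComp_succ G f h, GrpCat.coe_comp]; exact ih.comp (hf j)

lemma ker_bondComp_le {i j l : ℕ} (hij : i ≤ j) (hjl : j ≤ l) :
    (bondComp G f j l hjl).hom.ker ≤ (bondComp G f i l (hij.trans hjl)).hom.ker := by
  rw [← bondComp_comp G f hij hjl, GrpCat.hom_comp, ← MonoidHom.comap_ker]
  exact MonoidHom.ker_le_comap _ _

lemma ker_bondComp_le_ker_bondComp_of_le {i j l l' : ℕ} (hil : i ≤ l) (hjl : j ≤ l)
    (hll' : l ≤ l')
    (h : (bondComp G f i l hil).hom.ker ≤ (bondComp G f j l hjl).hom.ker) :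
    (bondComp G f i l' (hil.trans hll')).hom.ker
      ≤ (bondComp G f j l' (hjl.trans hll')).hom.ker := by
  rw [← bondComp_comp G f hil hll', ← bondComp_comp G f hjl hll', GrpCat.hom_comp,
    GrpCat.hom_comp, ← MonoidHom.comap_ker, ← MonoidHom.comap_ker]
  exact Subgroup.comap_mono h

lemma range_bondComp_eq_map {i j l : ℕ} (hij : i ≤ j) (hjl : j ≤ l) :
    (bondComp G f i l (hij.trans hjl)).hom.range
      = (bondComp G f j l hjl).hom.range.map (bondComp G f i j hij).hom := by
  rw [← bondComp_comp G f hij hjl, GrpCat.hom_comp, MonoidHom.range_comp]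

lemma range_bondComp_le {i j l : ℕ} (hij : i ≤ j) (hjl : j ≤ l) :
    (bondComp G f i l (hij.trans hjl)).hom.range ≤ (bondComp G f i j hij).hom.range := by
  rw [range_bondComp_eq_map G f hij hjl]
  exact Subgroup.map_le_range _ _

lemma bondComp_const (K : GrpCat.{u}) {i j : ℕ} (h : i ≤ j) :
    bondComp (fun _ => K) (fun _ => 𝟙 K) i j h = 𝟙 K := by
  induction j, h using Nat.le_induction with
  | base => exact bondComp_self _ _ i _
  | succ j h ih => rw [bondComp_succ _ _ h, ih, Category.comp_id]

def HasStableKernels : Prop :=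
  ∃ N, ∀ j, ∃ l, ∃ (hN : N ≤ l) (hj : j ≤ l),
    (bondComp G f N l hN).hom.ker ≤ (bondComp G f j l hj).hom.ker

def IsMittagLeffler : Prop :=
  ∀ i, ∃ j, ∃ hij : i ≤ j, ∀ l (hjl : j ≤ l),
    (bondComp G f i j hij).hom.range ≤ (bondComp G f i l (hij.trans hjl)).hom.range

end bondComp

namespace ProIso

variable {G : ℕ → GrpCat.{u}} {f : ∀ i, G (i + 1) ⟶ G i}
  {H : ℕ → GrpCat.{u}} {g : ∀ i, H (i + 1) ⟶ H i}

lemma u_comp_bondComp_comp_d (P : ProIso G f H g) {a m : ℕ} (ham : a ≤ m) :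
    P.u m ≫ bondComp H g (P.J a) (P.J m) (P.strictJ.monotone ham) ≫ P.d a =
      bondComp G f (P.I a) (P.I (m + 1)) (P.strictI.monotone (ham.trans m.le_succ)) := by
  induction m, ham using Nat.le_induction with
  | base => rw [bondComp_self, Category.id_comp, P.comm₁]
  | succ m ham ih =>
    rw [← bondComp_comp H g (P.strictJ.monotone ham) (P.strictJ.monotone m.le_succ),
      ← P.comm₂ m]
    simp only [Category.assoc]
    rw [ih, ← Category.assoc, P.comm₁, bondComp_comp]

lemma d_succ_injective (P : ProIso G f H g) (hg : ∀ i, Function.Injective (g i)) (k : ℕ) :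
    Function.Injective (P.d (k + 1)) := by
  have h := bondComp_injective H g hg (P.strictJ.monotone k.le_succ)
  rw [← P.comm₂ k, GrpCat.coe_comp] at h
  exact h.of_comp

lemma u_surjective (P : ProIso G f H g) (hg : ∀ i, Function.Surjective (g i)) (k : ℕ) :
    Function.Surjective (P.u k) := by
  have h := bondComp_surjective H g hg (P.strictJ.monotone k.le_succ)
  rw [← P.comm₂ k, GrpCat.coe_comp] at h
  exact h.of_comp


theorem hasStableKernels (P : ProIso G f H g) (hg : ∀ i, Function.Injective (g i)) :
    HasStableKernels G f := by
  refine ⟨P.I 1, fun j => ⟨P.I (j + 1 + 1), P.strictI.monotone (by omega),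
    P.strictI.le_apply.trans (P.strictI.monotone (by omega)), fun x hx => ?_⟩⟩
  rw [MonoidHom.mem_ker] at hx ⊢
  have hux : P.u (j + 1) x = 1 := by
    rw [← P.u_comp_bondComp_comp_d (a := 1) (m := j + 1) (by omega)] at hx
    have hd := (injective_iff_map_eq_one _).mp (P.d_succ_injective hg 0) _ hx
    exact (injective_iff_map_eq_one _).mp (bondComp_injective H g hg _) _ hd
  have hj : j ≤ P.I (j + 1) := P.strictI.le_apply.trans (P.strictI.monotone (by omega))
  rw [← bondComp_comp G f hj (P.strictI.monotone (by omega)), ← P.comm₁ (j + 1)]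
  simp [hux]

lemma range_bondComp_eq_range_d (P : ProIso G f H g) (hg : ∀ i, Function.Surjective (g i))
    {a m : ℕ} (ham : a ≤ m) :
    (bondComp G f (P.I a) (P.I (m + 1)) (P.strictI.monotone (ham.trans m.le_succ))).hom.range
      = (P.d a).hom.range := by
  have hsurj :
      Function.Surjective (P.u m ≫ bondComp H g (P.J a) (P.J m) (P.strictJ.monotone ham)) := by
    rw [GrpCat.coe_comp]
    exact (bondComp_surjective H g hg _).comp (P.u_surjective hg m)
  rw [← P.u_comp_bondComp_comp_d ham, ← Category.assoc, GrpCat.hom_comp, MonoidHom.range_comp,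
    MonoidHom.range_eq_top.mpr hsurj, ← MonoidHom.range_eq_map]

theorem isMittagLeffler (P : ProIso G f H g) (hg : ∀ i, Function.Surjective (g i)) :
    IsMittagLeffler G f := by
  intro i
  have hi : i ≤ P.I i := P.strictI.le_apply
  refine ⟨P.I (i + 1), hi.trans (P.strictI.monotone i.le_succ), fun l hl => ?_⟩
  have hl' : l ≤ P.I (l + 1) := P.strictI.le_apply.trans (P.strictI.monotone l.le_succ)
  calc (bondComp G f i (P.I (i + 1)) _).hom.range
      = (bondComp G f (P.I i) (P.I (i + 1)) _).hom.range.map (bondComp G f i (P.I i) hi).hom :=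
        range_bondComp_eq_map G f hi _
    _ = (bondComp G f (P.I i) (P.I (l + 1)) _).hom.range.map (bondComp G f i (P.I i) hi).hom := by
        rw [P.range_bondComp_eq_range_d hg le_rfl,
          P.range_bondComp_eq_range_d hg (hi.trans ((P.strictI.monotone i.le_succ).trans hl))]
    _ = (bondComp G f i (P.I (l + 1)) _).hom.range := (range_bondComp_eq_map G f hi _).symm
    _ ≤ _ := range_bondComp_le G f _ hl'

end ProIso

theorem MonoidHom.bijective_rangeRestrict_comp_subtype_range {A B C : Type*} [Group A] [Group B]
    [Group C] (α : A →* B) (β : B →* C) (hker : (β.comp α).ker ≤ α.ker)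
    (hrange : β.range ≤ (β.comp α).range) :
    Function.Bijective (β.rangeRestrict.comp α.range.subtype) := by
  constructor
  · rw [injective_iff_map_eq_one]
    rintro ⟨_, z, rfl⟩ h
    exact Subtype.ext (hker (congrArg Subtype.val h))
  · rintro ⟨y, hy⟩
    obtain ⟨z, rfl⟩ := hrange hy
    exact ⟨⟨α z, z, rfl⟩, rfl⟩

variable {G : ℕ → GrpCat.{u}} {f : ∀ i, G (i + 1) ⟶ G i}

theorem isStable_of_subsequence {n : ℕ → ℕ} (hn : StrictMono n)
    (hker : ∀ k, (bondComp G f (n k) (n (k + 1 + 1)) (hn.monotone (by omega))).hom.ker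
      ≤ (bondComp G f (n (k + 1)) (n (k + 1 + 1)) (hn.monotone (by omega))).hom.ker)
    (hrange : ∀ k, (bondComp G f (n k) (n (k + 1)) (hn.monotone (by omega))).hom.range
      ≤ (bondComp G f (n k) (n (k + 1 + 1)) (hn.monotone (by omega))).hom.range) :
    IsStable G f := by
  let Φ k : G (n (k + 1)) →* G (n k) :=
    (bondComp G f (n k) (n (k + 1)) (hn.monotone (by omega))).hom
  have hΦ k : (Φ k).comp (Φ (k + 1))
      = (bondComp G f (n k) (n (k + 1 + 1)) (hn.monotone (by omega))).hom := by
    rw [← GrpCat.hom_comp, bondComp_comp]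
  have hbij k := MonoidHom.bijective_rangeRestrict_comp_subtype_range (Φ (k + 1)) (Φ k)
    (by rw [hΦ]; exact hker k) (by rw [hΦ]; exact hrange k)
  let ψ k : (Φ k).range ≃* (Φ 0).range :=
    Nat.rec (MulEquiv.refl _) (fun k ψk => (MulEquiv.ofBijective _ (hbij k)).trans ψk) k
  refine ⟨GrpCat.of (Φ 0).range, ⟨{
    I := n
    J := n
    strictI := hn
    strictJ := hn
    hIJ := fun _ => le_rfl
    hJI := fun k => hn.monotone k.le_succ
    d := fun k => GrpCat.ofHom ((Φ k).range.subtype.comp (ψ k).symm.toMonoidHom)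
    u := fun k => GrpCat.ofHom ((ψ k).toMonoidHom.comp (Φ k).rangeRestrict)
    comm₁ := fun k => ?_
    comm₂ := fun k => ?_ }⟩⟩
  · ext x
    exact congrArg Subtype.val ((ψ k).symm_apply_apply ((Φ k).rangeRestrict x))
  · rw [bondComp_const]
    ext x
    exact congrArg Subtype.val ((ψ (k + 1)).apply_symm_apply x)

theorem isStable_of_hasStableKernels_of_isMittagLeffler (hker : HasStableKernels G f)
    (hML : IsMittagLeffler G f) : IsStable G f := by
  obtain ⟨N, hN⟩ := hker
  choose L _ _ hL using hN
  choose e hie he using hML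
  let n k := (fun i => max (i + 1) (max (e i) (L i)))^[k] N
  have hn_succ k : n (k + 1) = max (n k + 1) (max (e (n k)) (L (n k))) :=
    Function.iterate_succ_apply' ..
  have hn : StrictMono n := strictMono_nat_of_lt_succ fun k => by rw [hn_succ]; omega
  refine isStable_of_subsequence hn (fun k => ?_) (fun k => ?_)
  · have hNn : N ≤ n k := hn.monotone (Nat.zero_le k)
    have hLn : L (n (k + 1)) ≤ n (k + 1 + 1) := by rw [hn_succ (k + 1)]; omega
    calc _ ≤ (bondComp G f N (n (k + 1 + 1)) _).hom.ker := ker_bondComp_le G f hNn _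
      _ ≤ _ := ker_bondComp_le_ker_bondComp_of_le G f _ _ hLn (hL (n (k + 1)))
  · have hen : e (n k) ≤ n (k + 1) := by rw [hn_succ]; omega
    calc _ ≤ (bondComp G f (n k) (e (n k)) (hie (n k))).hom.range := range_bondComp_le G f _ hen
      _ ≤ _ := he (n k) _ (hen.trans (hn.monotone (by omega)))

/-- An inverse sequence of groups is stable if and only if it is both
pro-monomorphic and pro-epimorphic. -/
theorem isStable_iff_isProMono_and_isProEpi (G : ℕ → GrpCat.{u})
    (f : ∀ i, G (i + 1) ⟶ G i) :
    IsStable G f ↔ IsProMono G f ∧ IsProEpi G f := by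
  constructor
  · rintro ⟨K, hP⟩
    exact ⟨⟨_, _, fun _ => Function.injective_id, hP⟩,
      ⟨_, _, fun _ => Function.surjective_id, hP⟩⟩
  · rintro ⟨⟨_, _, hinj, ⟨Pmono⟩⟩, ⟨_, _, hsurj, ⟨Pepi⟩⟩⟩
    exact isStable_of_hasStableKernels_of_isMittagLeffler (Pmono.hasStableKernels hinj)
      (Pepi.isMittagLeffler hsurj)
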